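/- Let H ≥ 1 be an integer, b ∈ ℝ_{≥0}^H, and define B_{H'} = Σ_{h=1}^{H'} b_h for H' = 0,...,H. Let 0 < a_1 ≤ a_2 ≤ ... ≤ a_H be real numbers and α > 0 such that B_{H'} ≤ α·a_{H'} for every H' ∈ [H]. Then Σ_{h=1}^H b_h/a_h ≤ α(ln(a_H/a_1) + 1). -/

import Mathlib

/-!
Summation by parts: with `B h` the partial sums,
`∑ b h / a h = B H / a H + ∑_{h < H} B h (1 / a h - 1 / a (h + 1))`.
Since `B h ≤ α a h`, each term of the last sum is at most
`α (1 - a h / a (h + 1)) ≤ α log (a (h + 1) / a h)`; these telescope to `α log (a H / a 1)`,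
and `B H / a H ≤ α`.
-/

open Finset Real

lemma div_sub_div_le_mul_log {x y B α : ℝ} (hx : 0 < x) (hxy : x ≤ y) (hα : 0 ≤ α)
    (hB : B ≤ α * x) : B / x - B / y ≤ α * log (y / x) := by
  have hy : 0 < y := hx.trans_le hxy
  calc B / x - B / y = B * (y - x) / (x * y) := by field_simp
    _ ≤ α * x * (y - x) / (x * y) := by gcongr
    _ = α * (1 - (y / x)⁻¹) := by field_simp
    _ ≤ α * log (y / x) := by gcongr; exact one_sub_inv_le_log_of_pos (by positivity)

theorem sum_Icc_div_le_mul_log_add_sum_div {α : ℝ} (hα : 0 ≤ α) {a b : ℕ → ℝ} {n : ℕ}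
    (hn : 1 ≤ n) (ha_pos : ∀ h ∈ Icc 1 n, 0 < a h) (ha_mono : MonotoneOn a (Icc 1 n))
    (hB : ∀ m ∈ Icc 1 n, ∑ h ∈ Icc 1 m, b h ≤ α * a m) :
    ∑ h ∈ Icc 1 n, b h / a h ≤ α * log (a n / a 1) + (∑ h ∈ Icc 1 n, b h) / a n := by
  induction n, hn using Nat.le_induction with
  | base => simp [(ha_pos 1 (by simp)).ne']
  | succ n hn ih =>
    have hsub : Icc 1 n ⊆ Icc 1 (n + 1) := Icc_subset_Icc_right n.le_succ
    have h1_mem : 1 ∈ Icc 1 (n + 1) := by simp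
    have hn_mem : n ∈ Icc 1 (n + 1) := mem_Icc.2 ⟨hn, n.le_succ⟩
    have hn1_mem : n + 1 ∈ Icc 1 (n + 1) := by simp
    have ih := ih (fun h hh => ha_pos h (hsub hh)) (ha_mono.mono (coe_subset.2 hsub))
      (fun m hm => hB m (hsub hm))
    have hstep := div_sub_div_le_mul_log (ha_pos n hn_mem)
      (ha_mono (mem_coe.2 hn_mem) (mem_coe.2 hn1_mem) n.le_succ) hα (hB n hn_mem)
    have h1_ne := (ha_pos 1 h1_mem).ne'
    have hn_ne := (ha_pos n hn_mem).ne'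
    have hn1_ne := (ha_pos (n + 1) hn1_mem).ne'
    have hlog : log (a (n + 1) / a 1) = log (a n / a 1) + log (a (n + 1) / a n) := by
      rw [log_div hn1_ne h1_ne, log_div hn_ne h1_ne, log_div hn1_ne hn_ne]
      ring
    rw [sum_Icc_succ_top (by omega), sum_Icc_succ_top (by omega), add_div, hlog]
    linarith

theorem stmt_0_general (H : ℕ) (hH : 1 ≤ H) (b a : ℕ → ℝ)
    (ha_pos : ∀ h ∈ Finset.Icc 1 H, 0 < a h)
    (ha_mono : ∀ h ∈ Finset.Icc 1 H, ∀ h' ∈ Finset.Icc 1 H, h ≤ h' → a h ≤ a h')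
    (α : ℝ) (hα : 0 < α)
    (hB : ∀ H' ∈ Finset.Icc 1 H, ∑ h ∈ Finset.Icc 1 H', b h ≤ α * a H') :
    ∑ h ∈ Finset.Icc 1 H, b h / a h ≤ α * (Real.log (a H / a 1) + 1) := by
  have hH_mem : H ∈ Icc 1 H := mem_Icc.2 ⟨hH, le_rfl⟩
  have hlast : (∑ h ∈ Icc 1 H, b h) / a H ≤ α :=
    (div_le_iff₀ (ha_pos H hH_mem)).2 (hB H hH_mem)
  calc ∑ h ∈ Icc 1 H, b h / a h
      ≤ α * log (a H / a 1) + (∑ h ∈ Icc 1 H, b h) / a H :=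
        sum_Icc_div_le_mul_log_add_sum_div hα.le hH ha_pos
          (fun h hh h' hh' => ha_mono h hh h' hh') hB
    _ ≤ α * (log (a H / a 1) + 1) := by linarith

/-- Technical lemma: if partial sums of nonnegative `b` are bounded by `α * a`,
with `a` positive and nondecreasing, then `∑ b h / a h ≤ α (ln (a H / a 1) + 1)`. -/
theorem stmt_0 (H : ℕ) (hH : 1 ≤ H) (b a : ℕ → ℝ)
    (hb : ∀ h ∈ Finset.Icc 1 H, 0 ≤ b h)
    (ha_pos : ∀ h ∈ Finset.Icc 1 H, 0 < a h)
    (ha_mono : ∀ h ∈ Finset.Icc 1 H, ∀ h' ∈ Finset.Icc 1 H, h ≤ h' → a h ≤ a h')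
    (α : ℝ) (hα : 0 < α)
    (hB : ∀ H' ∈ Finset.Icc 1 H, ∑ h ∈ Finset.Icc 1 H', b h ≤ α * a H') :
    ∑ h ∈ Finset.Icc 1 H, b h / a h ≤ α * (Real.log (a H / a 1) + 1) :=
  stmt_0_general H hH b a ha_pos ha_mono α hα hB
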